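/- Let M, N : I² → I be means with M ≤ N satisfying |M(x,y)−N(x,y)| < |x−y| for x ≠ y, Tr the transfinite invariant mean, and Φ : I² → ℝ a continuous function satisfying Φ(x,y) = Φ(M(x,y),N(x,y)) for all x,y. If the map x ↦ Φ(x,x) is injective, then Tr is continuous. -/

import Mathlib

open Ordinal

def IsMean (I : Set ℝ) (M : ℝ → ℝ → ℝ) : Prop :=
  ∀ x ∈ I, ∀ y ∈ I, M x y ∈ I ∧ min x y ≤ M x y ∧ M x y ≤ max x y

/-- The transfinite orbit of `(x,y)` under `(M,N)`: `x₀ = x`, `y₀ = y`,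
`x_{α+1} = M(x_α, y_α)`, `y_{α+1} = N(x_α, y_α)`, and at limit ordinals
`x_α = lim_{β↗α} x_β = sup_{1 ≤ β < α} x_β`, `y_α = lim_{β↗α} y_β = inf_{1 ≤ β < α} y_β`
(for `M ≤ N` the sequences are monotone from index `1` on, so these limits are the
suprema/infima of the tails). -/
noncomputable def tOrbit (M N : ℝ → ℝ → ℝ) (x y : ℝ) (o : Ordinal.{0}) : ℝ × ℝ :=
  Ordinal.limitRecOn o (x, y)
    (fun _ p => (M p.1 p.2, N p.1 p.2))
    (fun α _ ih =>
      (sSup {t : ℝ | ∃ β : Ordinal, ∃ h : β < α, 1 ≤ β ∧ (ih β h).1 = t},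
       sInf {t : ℝ | ∃ β : Ordinal, ∃ h : β < α, 1 ≤ β ∧ (ih β h).2 = t}))


/-- The transfinite invariant mean `Tr(x,y) := x_{ω₁} (= y_{ω₁})`. -/
noncomputable def Tr (M N : ℝ → ℝ → ℝ) (x y : ℝ) : ℝ :=
  (tOrbit M N x y ω₁).1

/-! For `α ≥ 1` the orbit intervals `[x_α, y_α]` are nested, and `Φ(x_α, y_α) = Φ(x, y)` at every
stage, at limit stages by continuity of `Φ`, since `(x_α, y_α)` is a limit of earlier stages.
As `ℝ` is first countable and `ω₁` has uncountable cofinality, the orbit is constant from some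
countable stage `δ` up to `ω₁`, so `(x_δ, y_δ)` is a fixed point of `(M, N)`; the contraction
`|M - N| < |x - y|` forces `x_δ = y_δ`. Hence `Tr(x, y)` lies between `x` and `y` and
`f (Tr(x, y)) = Φ(x, y)` for `f t = Φ(t, t)`. Finally, a locally bounded `T` with `f ∘ T`
continuous and `f` continuous and injective is continuous: by compactness every ultrafilter limit
`L` of `T` satisfies `f L = f (T p)`. -/

open Set Filter Topology

section MonotoneAntitone

variable {ι β : Type*} [LinearOrder ι] {S : Set ι} {X Y : ι → β}

theorem le_of_monotoneOn_of_antitoneOn [Preorder β] (hX : MonotoneOn X S) (hY : AntitoneOn Y S)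
    (hXY : ∀ i ∈ S, X i ≤ Y i) {j k : ι} (hj : j ∈ S) (hk : k ∈ S) : X j ≤ Y k := by
  rcases le_total j k with h | h
  · exact (hX hj hk h).trans (hXY k hk)
  · exact (hXY j hj).trans (hY hk hj h)

theorem le_csSup_image_le_csInf_image_le [ConditionallyCompleteLattice β] (hX : MonotoneOn X S)
    (hY : AntitoneOn Y S) (hXY : ∀ i ∈ S, X i ≤ Y i) :
    ∀ i ∈ S, X i ≤ sSup (X '' S) ∧ sSup (X '' S) ≤ sInf (Y '' S) ∧ sInf (Y '' S) ≤ Y i := by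
  intro i hi
  have cross : ∀ {j k}, j ∈ S → k ∈ S → X j ≤ Y k := le_of_monotoneOn_of_antitoneOn hX hY hXY
  have hbX : BddAbove (X '' S) := ⟨Y i, forall_mem_image.2 fun j hj => cross hj hi⟩
  have hbY : BddBelow (Y '' S) := ⟨X i, forall_mem_image.2 fun k hk => cross hi hk⟩
  refine ⟨le_csSup hbX (mem_image_of_mem X hi), ?_, csInf_le hbY (mem_image_of_mem Y hi)⟩
  exact csSup_le ⟨_, mem_image_of_mem X hi⟩ <| forall_mem_image.2 fun j hj =>
    le_csInf ⟨_, mem_image_of_mem Y hi⟩ <| forall_mem_image.2 fun k hk => cross hj hk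

theorem mem_closure_image_of_monotoneOn_of_antitoneOn [ConditionallyCompleteLinearOrder β]
    [TopologicalSpace β] [OrderTopology β] (hS : S.Nonempty) (hX : MonotoneOn X S)
    (hY : AntitoneOn Y S) (hXY : ∀ i ∈ S, X i ≤ Y i) :
    (sSup (X '' S), sInf (Y '' S)) ∈ closure ((fun i => (X i, Y i)) '' S) := by
  obtain ⟨i, hi⟩ := hS
  have : Nonempty S := ⟨⟨i, hi⟩⟩
  have cross : ∀ {j k}, j ∈ S → k ∈ S → X j ≤ Y k := le_of_monotoneOn_of_antitoneOn hX hY hXY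
  have hXt : Tendsto (fun j : S => X j) atTop (𝓝 (sSup (X '' S))) := by
    rw [sSup_image']
    exact tendsto_atTop_ciSup (fun j k h => hX j.2 k.2 h)
      ⟨Y i, forall_mem_range.2 fun j => cross j.2 hi⟩
  have hYt : Tendsto (fun j : S => Y j) atTop (𝓝 (sInf (Y '' S))) := by
    rw [sInf_image']
    exact tendsto_atTop_ciInf (fun j k h => hY j.2 k.2 h)
      ⟨X i, forall_mem_range.2 fun k => cross hi k.2⟩
  exact mem_closure_of_tendsto (hXt.prodMk_nhds hYt)
    (Eventually.of_forall fun j => mem_image_of_mem _ j.2)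

end MonotoneAntitone

theorem exists_mem_Ico_omega_one_csSup_le {β : Type*} [ConditionallyCompleteLinearOrder β]
    [TopologicalSpace β] [OrderTopology β] [FirstCountableTopology β] {X : Ordinal.{0} → β}
    (hX : MonotoneOn X (Ico 1 ω₁)) (hb : BddAbove (X '' Ico 1 ω₁)) :
    ∃ δ ∈ Ico 1 ω₁, sSup (X '' Ico 1 ω₁) ≤ X δ := by
  have hne : (X '' Ico 1 ω₁).Nonempty :=
    ⟨X 1, 1, ⟨le_rfl, one_lt_of_isSuccLimit (Cardinal.isSuccLimit_omega 1)⟩, rfl⟩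
  obtain ⟨u, -, hu, hmem⟩ := exists_seq_tendsto_sSup hne hb
  choose γ hγ hXγ using hmem
  have hδ : ⨆ n, γ n ∈ Ico 1 ω₁ :=
    ⟨(hγ 0).1.trans (Ordinal.le_iSup γ 0), Ordinal.iSup_lt_omega_one fun n => (hγ n).2⟩
  refine ⟨_, hδ, le_of_tendsto' hu fun n => ?_⟩
  exact hXγ n ▸ hX (hγ n) hδ (Ordinal.le_iSup γ n)

theorem ContinuousWithinAt.of_comp_injOn {X : Type*} [TopologicalSpace X] {s : Set X} {x₀ : X}
    {I : Set ℝ} {a b T : X → ℝ} {f : ℝ → ℝ} (hfT : ContinuousWithinAt (f ∘ T) s x₀)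
    (hf : ContinuousOn f I) (hinj : InjOn f I) (ha : ContinuousWithinAt a s x₀)
    (hb : ContinuousWithinAt b s x₀) (hT : ∀ x ∈ s, T x ∈ uIcc (a x) (b x))
    (habI : ∀ x ∈ s, uIcc (a x) (b x) ⊆ I) (hx₀ : x₀ ∈ s) : ContinuousWithinAt T s x₀ := by
  rw [ContinuousWithinAt, tendsto_iff_ultrafilter]
  intro U hU
  have hsU : ∀ᶠ x in U, x ∈ s := hU self_mem_nhdsWithin
  have hmin := (ha.tendsto.comp hU).min (hb.tendsto.comp hU)
  have hmax := (ha.tendsto.comp hU).max (hb.tendsto.comp hU)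
  -- `T` is eventually bounded along `U`, so it converges along `U` to some `L`
  have hK : ∀ᶠ x in U, T x ∈ Icc (min (a x₀) (b x₀) - 1) (max (a x₀) (b x₀) + 1) := by
    filter_upwards [hsU, hmin.eventually_const_lt (sub_one_lt _),
      hmax.eventually_lt_const (lt_add_one _)] with x hx h₁ h₂
    exact ⟨h₁.le.trans (hT x hx).1, (hT x hx).2.trans h₂.le⟩
  obtain ⟨L, -, hL⟩ := isCompact_Icc.ultrafilter_le_nhds' (U.map T) hK
  have hLab : L ∈ uIcc (a x₀) (b x₀) := by
    refine ⟨le_of_tendsto_of_tendsto hmin hL ?_, le_of_tendsto_of_tendsto hL hmax ?_⟩ <;>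
      filter_upwards [hsU] with x hx
    exacts [(hT x hx).1, (hT x hx).2]
  have hLI : L ∈ I := habI x₀ hx₀ hLab
  have hfL : Tendsto (f ∘ T) U (𝓝 (f L)) :=
    (hf L hLI).tendsto.comp (tendsto_nhdsWithin_iff.2
      ⟨hL, by filter_upwards [hsU] with x hx using habI x hx (hT x hx)⟩)
  have hLT : L = T x₀ :=
    hinj hLI (habI x₀ hx₀ (hT x₀ hx₀)) (tendsto_nhds_unique hfL (hfT.tendsto.comp hU))
  rwa [← hLT]

theorem IsMean.mem_uIcc {I : Set ℝ} {M : ℝ → ℝ → ℝ} (hM : IsMean I M) {x y : ℝ} (hx : x ∈ I)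
    (hy : y ∈ I) : M x y ∈ uIcc x y :=
  (hM x hx y hy).2

section Orbit

variable {I : Set ℝ} {M N Φ : ℝ → ℝ → ℝ} {x y : ℝ}

theorem tOrbit_zero : tOrbit M N x y 0 = (x, y) :=
  limitRecOn_zero _ _ _

theorem tOrbit_add_one (α : Ordinal) :
    tOrbit M N x y (α + 1) =
      (M (tOrbit M N x y α).1 (tOrbit M N x y α).2, N (tOrbit M N x y α).1 (tOrbit M N x y α).2) :=
  limitRecOn_add_one _ _ _ _

theorem tOrbit_one : tOrbit M N x y 1 = (M x y, N x y) := by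
  rw [← zero_add 1, tOrbit_add_one, tOrbit_zero]

theorem tOrbit_limit {α : Ordinal} (hα : Order.IsSuccLimit α) :
    tOrbit M N x y α =
      (sSup ((fun β => (tOrbit M N x y β).1) '' Ico 1 α),
       sInf ((fun β => (tOrbit M N x y β).2) '' Ico 1 α)) := by
  rw [tOrbit, limitRecOn_limit _ _ _ _ hα]
  congr 1 <;> congr 1 <;> ext t <;> simp only [tOrbit, mem_ofPred_eq, mem_image, mem_Ico] <;>
    exact ⟨fun ⟨β, hβ, h1, h⟩ => ⟨β, ⟨h1, hβ⟩, h⟩, fun ⟨β, ⟨h1, hβ⟩, h⟩ => ⟨β, hβ, h1, h⟩⟩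

variable (hI : I.OrdConnected) (hM : IsMean I M) (hN : IsMean I N)
  (hMN : ∀ x ∈ I, ∀ y ∈ I, M x y ≤ N x y) (hx : x ∈ I) (hy : y ∈ I)
include hI hM hN hMN hx hy

theorem tOrbit_nested {α β : Ordinal} (hβ : 1 ≤ β) (hβα : β ≤ α) :
    (tOrbit M N x y β).1 ≤ (tOrbit M N x y α).1 ∧
      (tOrbit M N x y α).1 ≤ (tOrbit M N x y α).2 ∧
      (tOrbit M N x y α).2 ≤ (tOrbit M N x y β).2 := by
  induction α using limitRecOn generalizing β with
  | zero => exact absurd (hβ.trans hβα) (by simp)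
  | add_one α ih =>
    rcases eq_zero_or_pos α with rfl | hα
    · obtain rfl : β = 1 := le_antisymm (by simpa using hβα) hβ
      simpa [tOrbit_one] using hMN x hx y hy
    obtain ⟨h1a, hab, hb1⟩ := ih le_rfl (Order.one_le_iff_pos.2 hα)
    set a := (tOrbit M N x y α).1
    set b := (tOrbit M N x y α).2
    have hJ : Icc (M x y) (N x y) ⊆ I := (ordConnected_uIcc.out (hM.mem_uIcc hx hy)
      (hN.mem_uIcc hx hy)).trans (hI.uIcc_subset hx hy)
    rw [tOrbit_one] at h1a hb1
    have ha : a ∈ I := hJ ⟨h1a, hab.trans hb1⟩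
    have hb : b ∈ I := hJ ⟨h1a.trans hab, hb1⟩
    have hMab := hM.mem_uIcc ha hb
    have hNab := hN.mem_uIcc ha hb
    rw [uIcc_of_le hab] at hMab hNab
    rw [tOrbit_add_one]
    rcases hβα.lt_or_eq with hβα | rfl
    · obtain ⟨hβa, -, hbβ⟩ := ih hβ (Order.le_of_lt_succ hβα)
      exact ⟨hβa.trans hMab.1, hMN a ha b hb, hNab.2.trans hbβ⟩
    · simp only [tOrbit_add_one]
      exact ⟨le_rfl, hMN a ha b hb, le_rfl⟩
  | limit α hα ih =>
    have hmono : ∀ γ ∈ Ico 1 α, ∀ δ ∈ Ico 1 α, γ ≤ δ →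
        (tOrbit M N x y γ).1 ≤ (tOrbit M N x y δ).1 ∧
          (tOrbit M N x y δ).2 ≤ (tOrbit M N x y γ).2 :=
      fun γ hγ δ hδ hγδ => ⟨(ih δ hδ.2 hγ.1 hγδ).1, (ih δ hδ.2 hγ.1 hγδ).2.2⟩
    have key := le_csSup_image_le_csInf_image_le
      (fun γ hγ δ hδ h => (hmono γ hγ δ hδ h).1) (fun γ hγ δ hδ h => (hmono γ hγ δ hδ h).2)
      (fun γ hγ => (ih γ hγ.2 hγ.1 le_rfl).2.1)
    rcases hβα.lt_or_eq with hβα | rfl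
    · rw [tOrbit_limit hα]
      exact key β ⟨hβ, hβα⟩
    · refine ⟨le_rfl, ?_, le_rfl⟩
      rw [tOrbit_limit hα]
      exact (key 1 ⟨le_rfl, one_lt_of_isSuccLimit hα⟩).2.1

theorem tOrbit_mem_uIcc (α : Ordinal) :
    (tOrbit M N x y α).1 ∈ uIcc x y ∧ (tOrbit M N x y α).2 ∈ uIcc x y := by
  rcases eq_zero_or_pos α with rfl | hα
  · simp [tOrbit_zero]
  obtain ⟨h1a, hab, hb1⟩ := tOrbit_nested hI hM hN hMN hx hy le_rfl (Order.one_le_iff_pos.2 hα)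
  rw [tOrbit_one] at h1a hb1
  have hJ := ordConnected_uIcc.out (hM.mem_uIcc hx hy) (hN.mem_uIcc hx hy)
  exact ⟨hJ ⟨h1a, hab.trans hb1⟩, hJ ⟨h1a.trans hab, hb1⟩⟩

theorem tOrbit_mem_prod (α : Ordinal) :
    ((tOrbit M N x y α).1, (tOrbit M N x y α).2) ∈ I ×ˢ I :=
  ⟨hI.uIcc_subset hx hy (tOrbit_mem_uIcc hI hM hN hMN hx hy α).1,
    hI.uIcc_subset hx hy (tOrbit_mem_uIcc hI hM hN hMN hx hy α).2⟩

theorem apply_tOrbit_eq (hΦ : ContinuousOn (fun p : ℝ × ℝ => Φ p.1 p.2) (I ×ˢ I))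
    (hΦinv : ∀ x ∈ I, ∀ y ∈ I, Φ x y = Φ (M x y) (N x y)) (α : Ordinal) :
    Φ (tOrbit M N x y α).1 (tOrbit M N x y α).2 = Φ x y := by
  induction α using limitRecOn with
  | zero => rw [tOrbit_zero]
  | add_one α ih =>
    obtain ⟨ha, hb⟩ := tOrbit_mem_prod hI hM hN hMN hx hy α
    rw [tOrbit_add_one, ← hΦinv _ ha _ hb, ih]
  | limit α hα ih =>
    set S := Ico 1 α
    set orbit := fun β => ((tOrbit M N x y β).1, (tOrbit M N x y β).2)
    have hclosure : orbit α ∈ closure (orbit '' S) := by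
      have hmono := fun {γ δ} (hγ : γ ∈ S) (hδ : δ ∈ S) (h : γ ≤ δ) =>
        tOrbit_nested hI hM hN hMN hx hy hγ.1 h
      rw [show orbit α = tOrbit M N x y α from rfl, tOrbit_limit hα]
      exact mem_closure_image_of_monotoneOn_of_antitoneOn ⟨1, le_rfl, one_lt_of_isSuccLimit hα⟩
        (fun γ hγ δ hδ h => (hmono hγ hδ h).1) (fun γ hγ δ hδ h => (hmono hγ hδ h).2.2)
        (fun γ hγ => (hmono hγ hγ le_rfl).2.1)
    have hcont : ContinuousWithinAt (fun p : ℝ × ℝ => Φ p.1 p.2) (orbit '' S) (orbit α) :=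
      (hΦ _ (tOrbit_mem_prod hI hM hN hMN hx hy α)).mono
        (image_subset_iff.2 fun β _ => tOrbit_mem_prod hI hM hN hMN hx hy β)
    have hconst : (fun p : ℝ × ℝ => Φ p.1 p.2) '' (orbit '' S) ⊆ {Φ x y} := by
      rintro _ ⟨_, ⟨β, hβ, rfl⟩, rfl⟩
      exact ih β hβ.2
    simpa using closure_mono hconst (hcont.mem_closure_image hclosure)

theorem exists_tOrbit_eq_tOrbit_omega_one :
    ∃ δ ∈ Ico 1 ω₁, tOrbit M N x y δ = tOrbit M N x y ω₁ := by
  have hmono := fun {γ δ} (hγ : γ ∈ Ico 1 ω₁) (h : γ ≤ δ) =>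
    tOrbit_nested hI hM hN hMN hx hy hγ.1 h
  have key := le_csSup_image_le_csInf_image_le
    (fun γ hγ δ _ h => (hmono hγ h).1) (fun γ hγ δ _ h => (hmono hγ h).2.2)
    (fun γ hγ => (hmono hγ le_rfl).2.1)
  obtain ⟨δ₁, hδ₁, hX⟩ := exists_mem_Ico_omega_one_csSup_le
    (fun γ hγ δ _ h => (hmono hγ h).1) ⟨_, forall_mem_image.2 fun γ hγ => (key γ hγ).1⟩
  obtain ⟨δ₂, hδ₂, hY⟩ := exists_mem_Ico_omega_one_csSup_le (β := ℝᵒᵈ)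
    (fun γ hγ δ _ h => (hmono hγ h).2.2) ⟨_, forall_mem_image.2 fun γ hγ => (key γ hγ).2.2⟩
  have hlim := tOrbit_limit (M := M) (N := N) (x := x) (y := y) (Cardinal.isSuccLimit_omega 1)
  have hδ : max δ₁ δ₂ ∈ Ico 1 ω₁ := ⟨hδ₁.1.trans (le_max_left _ _), max_lt hδ₁.2 hδ₂.2⟩
  refine ⟨_, hδ, ?_⟩
  obtain ⟨hX₁, -, -⟩ := hmono hδ₁ (le_max_left δ₁ δ₂)
  obtain ⟨-, -, hY₂⟩ := hmono hδ₂ (le_max_right δ₁ δ₂)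
  obtain ⟨hXω, -, hYω⟩ := hmono hδ hδ.2.le
  rw [hlim] at hXω hYω ⊢
  exact Prod.ext (hXω.antisymm (hX.trans hX₁)) ((hY₂.trans hY).antisymm hYω)

theorem tOrbit_omega_one_fst_eq_snd
    (hcontr : ∀ x ∈ I, ∀ y ∈ I, x ≠ y → |M x y - N x y| < |x - y|) :
    (tOrbit M N x y ω₁).1 = (tOrbit M N x y ω₁).2 := by
  obtain ⟨δ, hδ, hδω⟩ := exists_tOrbit_eq_tOrbit_omega_one hI hM hN hMN hx hy
  have hδω' : δ + 1 < ω₁ := (Cardinal.isSuccLimit_omega 1).add_one_lt hδ.2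
  obtain ⟨ha, hb⟩ := tOrbit_mem_prod hI hM hN hMN hx hy ω₁
  set a := (tOrbit M N x y ω₁).1
  set b := (tOrbit M N x y ω₁).2
  -- the orbit is constant from the countable stage `δ` on, so `(a, b)` is fixed by `(M, N)`
  have hfix : M a b = a ∧ N a b = b := by
    obtain ⟨hX, -, hY⟩ := tOrbit_nested hI hM hN hMN hx hy hδ.1 le_self_add
    obtain ⟨hX', -, hY'⟩ := tOrbit_nested hI hM hN hMN hx hy
      (hδ.1.trans le_self_add) hδω'.le
    rw [hδω, tOrbit_add_one, hδω] at hX hY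
    rw [tOrbit_add_one, hδω] at hX' hY'
    exact ⟨hX'.antisymm hX, hY.antisymm hY'⟩
  obtain ⟨hMa, hNb⟩ := hfix
  by_contra hab
  have := hcontr a ha b hb hab
  rw [hMa, hNb] at this
  exact this.false

theorem Tr_mem_uIcc : Tr M N x y ∈ uIcc x y :=
  (tOrbit_mem_uIcc hI hM hN hMN hx hy ω₁).1

theorem apply_Tr_Tr_eq (hcontr : ∀ x ∈ I, ∀ y ∈ I, x ≠ y → |M x y - N x y| < |x - y|)
    (hΦ : ContinuousOn (fun p : ℝ × ℝ => Φ p.1 p.2) (I ×ˢ I))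
    (hΦinv : ∀ x ∈ I, ∀ y ∈ I, Φ x y = Φ (M x y) (N x y)) :
    Φ (Tr M N x y) (Tr M N x y) = Φ x y :=
  (congrArg (Φ _) (tOrbit_omega_one_fst_eq_snd hI hM hN hMN hx hy hcontr)).trans
    (apply_tOrbit_eq hI hM hN hMN hx hy hΦ hΦinv ω₁)

end Orbit

/-- if a continuous `Φ : I² → ℝ` satisfies `Φ = Φ ∘ (M,N)` and
`x ↦ Φ(x,x)` is injective, then the transfinite invariant mean `Tr` is continuous. -/
theorem stmt18 (I : Set ℝ) (hI : I.OrdConnected) (M N : ℝ → ℝ → ℝ)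
    (hM : IsMean I M) (hN : IsMean I N)
    (hMN : ∀ x ∈ I, ∀ y ∈ I, M x y ≤ N x y)
    (hcontr : ∀ x ∈ I, ∀ y ∈ I, x ≠ y → |M x y - N x y| < |x - y|)
    (Φ : ℝ → ℝ → ℝ) (hΦ : ContinuousOn (fun p : ℝ × ℝ => Φ p.1 p.2) (I ×ˢ I))
    (hΦinv : ∀ x ∈ I, ∀ y ∈ I, Φ x y = Φ (M x y) (N x y))
    (hinj : Set.InjOn (fun t => Φ t t) I) :
    ContinuousOn (fun p : ℝ × ℝ => Tr M N p.1 p.2) (I ×ˢ I) := by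
  have hdiag : ContinuousOn (fun t => Φ t t) I :=
    hΦ.comp (continuousOn_id.prodMk continuousOn_id) fun t ht => ⟨ht, ht⟩
  intro p hp
  refine ContinuousWithinAt.of_comp_injOn ?_ hdiag hinj continuousWithinAt_fst
    continuousWithinAt_snd (fun q hq => Tr_mem_uIcc hI hM hN hMN hq.1 hq.2)
    (fun q hq => hI.uIcc_subset hq.1 hq.2) hp
  exact (hΦ p hp).congr (fun q hq => apply_Tr_Tr_eq hI hM hN hMN hq.1 hq.2 hcontr hΦ hΦinv)
    (apply_Tr_Tr_eq hI hM hN hMN hp.1 hp.2 hcontr hΦ hΦinv)
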